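/- arXiv:2411.02008 — 3 statements merged into one kernel-verified Lean document; each statement's English description precedes it below -/
import Mathlib

section
/- The Moreau envelope of the maximum function has the closed form: for every λ > 0 and every y ∈ ℝ^n, inf_{x ∈ ℝ^n} ( max_{1≤i≤n} x_i + λ‖x − y‖² ) = λ‖y‖² − dist(2λy, Δ_n)²/(4λ), where dist(2λy, Δ_n) = inf_{p ∈ Δ_n} ‖2λy − p‖ is the Euclidean distance from 2λy to the unit simplex. -/
/-! The maximum function is the support function of the simplex:
`max_i x_i = sup_{q ∈ Δ_n} ⟪q, x⟫`. For the support function `σ_K` of any compact convex `K`,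
let `p` be the point of `K` nearest to `2λy` and `x₀ = y - p / (2λ)`. Completing the square,
`⟪p, x⟫ + λ‖x - y‖² = λ‖x - x₀‖² + λ‖y‖² - ‖2λy - p‖² / (4λ)`, so `σ_K ≥ ⟪p, ·⟫` gives the lower
bound. Since `2λx₀ = 2λy - p` lies in the normal cone of `K` at `p`, the point `p` maximizes
`⟪·, x₀⟫` on `K`, hence `σ_K x₀ = ⟪p, x₀⟫` and the bound is attained at `x₀`. -/

open scoped BigOperators

def unitSimplex (n : ℕ) : Set (EuclideanSpace ℝ (Fin n)) :=
  {x | (∀ i, 0 ≤ x i) ∧ ∑ i, x i = 1}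

open RealInnerProductSpace Metric

section SupportFunction

variable {E : Type*} [NormedAddCommGroup E] [InnerProductSpace ℝ E]

theorem inner_add_mul_norm_sub_sq_eq (p x y : E) {lam : ℝ} (hlam : lam ≠ 0) :
    ⟪p, x⟫ + lam * ‖x - y‖ ^ 2 =
      lam * ‖x - (y - (2 * lam)⁻¹ • p)‖ ^ 2 +
        (lam * ‖y‖ ^ 2 - ‖(2 * lam) • y - p‖ ^ 2 / (4 * lam)) := by
  rw [show x - (y - (2 * lam)⁻¹ • p) = (x - y) + (2 * lam)⁻¹ • p by abel, norm_add_sq_real,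
    norm_sub_sq_real ((2 * lam) • y) p, norm_smul, norm_smul, real_inner_smul_right,
    real_inner_smul_left, inner_sub_left, real_inner_comm x p]
  simp only [Real.norm_eq_abs, mul_pow, sq_abs, inv_pow]
  field_simp
  ring

theorem exists_nearest_mem_forall_inner_le_zero {K : Set E} (hK : IsCompact K)
    (hKc : Convex ℝ K) (hne : K.Nonempty) (z : E) :
    ∃ p ∈ K, ‖z - p‖ = infDist z K ∧ ∀ q ∈ K, ⟪z - p, q - p⟫ ≤ 0 := by
  obtain ⟨p, hp, hpd⟩ := hK.exists_infDist_eq_dist hne z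
  rw [dist_eq_norm] at hpd
  refine ⟨p, hp, hpd.symm, (norm_eq_iInf_iff_real_inner_le_zero hKc hp).1 ?_⟩
  simp_rw [← hpd, infDist_eq_iInf, dist_eq_norm]

theorem iInf_add_mul_norm_sub_sq_eq_of_isLUB_inner {K : Set E} (hK : IsCompact K)
    (hKc : Convex ℝ K) (hne : K.Nonempty) {f : E → ℝ}
    (hf : ∀ x, IsLUB ((⟪·, x⟫) '' K) (f x)) {lam : ℝ} (hlam : 0 < lam) (y : E) :
    ⨅ x, f x + lam * ‖x - y‖ ^ 2 =
      lam * ‖y‖ ^ 2 - infDist ((2 * lam) • y) K ^ 2 / (4 * lam) := by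
  obtain ⟨p, hpK, hpd, hp⟩ := exists_nearest_mem_forall_inner_le_zero hK hKc hne ((2 * lam) • y)
  rw [← hpd]
  have key := fun x => inner_add_mul_norm_sub_sq_eq p x y hlam.ne'
  have hlb : ∀ x, lam * ‖y‖ ^ 2 - ‖(2 * lam) • y - p‖ ^ 2 / (4 * lam) ≤
      f x + lam * ‖x - y‖ ^ 2 := fun x => by
    have hpx := (hf x).1 ⟨p, hpK, rfl⟩
    nlinarith [key x, norm_nonneg (x - (y - (2 * lam)⁻¹ • p))]
  set x₀ := y - (2 * lam)⁻¹ • p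
  have hx₀ : f x₀ = ⟪p, x₀⟫ := by
    refine (hf x₀).unique (IsGreatest.isLUB ⟨⟨p, hpK, rfl⟩, ?_⟩)
    rintro _ ⟨q, hq, rfl⟩
    have h : x₀ = (2 * lam)⁻¹ • ((2 * lam) • y - p) := by
      rw [smul_sub, smul_smul, inv_mul_cancel₀ (by positivity), one_smul]
    have hqx₀ : ⟪q - p, x₀⟫ ≤ 0 := by
      rw [h, real_inner_smul_right, real_inner_comm]
      exact mul_nonpos_of_nonneg_of_nonpos (by positivity) (hp q hq)
    rw [inner_sub_left] at hqx₀
    linarith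
  refine le_antisymm ?_ (le_ciInf hlb)
  refine (ciInf_le ⟨_, Set.forall_mem_range.2 hlb⟩ x₀).trans_eq ?_
  rw [hx₀, key, sub_self, norm_zero]
  ring

end SupportFunction

theorem unitSimplex_eq_image (n : ℕ) :
    unitSimplex n = (EuclideanSpace.equiv (Fin n) ℝ).symm '' stdSimplex ℝ (Fin n) := by
  ext x
  exact ⟨fun hx => ⟨x, hx, rfl⟩, by rintro ⟨w, hw, rfl⟩; exact hw⟩

theorem isCompact_unitSimplex (n : ℕ) : IsCompact (unitSimplex n) := by
  rw [unitSimplex_eq_image]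
  exact (isCompact_stdSimplex ℝ (Fin n)).image (EuclideanSpace.equiv (Fin n) ℝ).symm.continuous

theorem convex_unitSimplex (n : ℕ) : Convex ℝ (unitSimplex n) := by
  rw [unitSimplex_eq_image]
  exact (convex_stdSimplex ℝ (Fin n)).linear_image
    (EuclideanSpace.equiv (Fin n) ℝ).symm.toLinearEquiv.toLinearMap

theorem single_mem_unitSimplex {n : ℕ} (i : Fin n) :
    EuclideanSpace.single i (1 : ℝ) ∈ unitSimplex n :=
  ⟨fun j => by by_cases h : j = i <;> simp [h], by simp⟩

theorem isLUB_inner_unitSimplex {n : ℕ} (hn : 0 < n) (x : EuclideanSpace ℝ (Fin n)) :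
    IsLUB ((⟪·, x⟫) '' unitSimplex n) (⨆ i, x i) := by
  have : Nonempty (Fin n) := ⟨⟨0, hn⟩⟩
  refine ⟨?_, fun b hb => ciSup_le fun i => ?_⟩
  · rintro _ ⟨q, hq, rfl⟩
    calc ⟪q, x⟫ = ∑ i, q i * x i := by
          simp only [PiLp.inner_apply, RCLike.inner_apply, conj_trivial, mul_comm]
      _ ≤ ∑ i, q i * ⨆ j, x j := Finset.sum_le_sum fun i _ =>
          mul_le_mul_of_nonneg_left (le_ciSup (Set.finite_range _).bddAbove i) (hq.1 i)
      _ = ⨆ j, x j := by rw [← Finset.sum_mul, hq.2, one_mul]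
  · simpa [EuclideanSpace.inner_single_left] using hb ⟨_, single_mem_unitSimplex i, rfl⟩

/-- Closed form of the Moreau envelope of the maximum function:
`inf_x ( max_i x_i + λ‖x − y‖² ) = λ‖y‖² − dist(2λy, Δ_n)²/(4λ)`. -/
theorem stmt3 {n : ℕ} (hn : 0 < n) (lam : ℝ) (hlam : 0 < lam)
    (y : EuclideanSpace ℝ (Fin n)) :
    (⨅ x : EuclideanSpace ℝ (Fin n), ((⨆ i, x i) + lam * ‖x - y‖ ^ 2)) =
      lam * ‖y‖ ^ 2 - (Metric.infDist ((2 * lam) • y) (unitSimplex n)) ^ 2 / (4 * lam) :=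
  iInf_add_mul_norm_sub_sq_eq_of_isLUB_inner (isCompact_unitSimplex n) (convex_unitSimplex n)
    ⟨_, single_mem_unitSimplex ⟨0, hn⟩⟩ (isLUB_inner_unitSimplex hn) hlam y
end

section
/- C_λ is nondecreasing for the coordinatewise order: for every λ > 0 and all y, y' ∈ ℝ^n with y_i ≤ y'_i for every i, one has C_λ(y) ≤ C_λ(y'). -/
/-!
Expanding the square, `λ‖y‖² − ‖2λy − x‖²/(4λ) = ⟪y, x⟫ − ‖x‖²/(4λ)`, so `C_λ(y) − 1/(4λ)` is the
maximum over `x ∈ Δ_n` of these affine functions of `y` (attained at a nearest point of the closed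
set `Δ_n`). Each of them is coordinatewise nondecreasing because `x ≥ 0`, hence so is their maximum.
-/

open scoped BigOperators

/-- The compensated-convexity upper transform of the maximum function:
`C_λ(y) = λ‖y‖² − dist(2λy, Δ_n)²/(4λ) + 1/(4λ)`. -/
noncomputable def Cupper {n : ℕ} (lam : ℝ) (y : EuclideanSpace ℝ (Fin n)) : ℝ :=
  lam * ‖y‖ ^ 2 - (Metric.infDist ((2 * lam) • y) (unitSimplex n)) ^ 2 / (4 * lam) + 1 / (4 * lam)

open Metric RealInnerProductSpace

section InnerProductSpace

variable {E : Type*} [NormedAddCommGroup E] [InnerProductSpace ℝ E]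

lemma mul_norm_sq_sub_dist_smul_sq_div {lam : ℝ} (hlam : lam ≠ 0) (y x : E) :
    lam * ‖y‖ ^ 2 - dist ((2 * lam) • y) x ^ 2 / (4 * lam) = ⟪y, x⟫ - ‖x‖ ^ 2 / (4 * lam) := by
  rw [dist_eq_norm, norm_sub_sq_real, norm_smul, real_inner_smul_left, Real.norm_eq_abs, mul_pow,
    sq_abs]
  field_simp
  ring

theorem isGreatest_inner_sub_norm_sq_div [ProperSpace E] {s : Set E} (hs : IsClosed s)
    (hne : s.Nonempty) {lam : ℝ} (hlam : 0 < lam) (y : E) :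
    IsGreatest ((fun x ↦ ⟪y, x⟫ - ‖x‖ ^ 2 / (4 * lam)) '' s)
      (lam * ‖y‖ ^ 2 - infDist ((2 * lam) • y) s ^ 2 / (4 * lam)) := by
  constructor
  · obtain ⟨x, hx, hdist⟩ := hs.exists_infDist_eq_dist hne ((2 * lam) • y)
    exact ⟨x, hx, by rw [hdist, mul_norm_sq_sub_dist_smul_sq_div hlam.ne']⟩
  · rintro _ ⟨x, hx, rfl⟩
    dsimp only
    rw [← mul_norm_sq_sub_dist_smul_sq_div hlam.ne']
    have hsq : infDist ((2 * lam) • y) s ^ 2 ≤ dist ((2 * lam) • y) x ^ 2 :=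
      pow_le_pow_left₀ infDist_nonneg (infDist_le_dist_of_mem hx) 2
    gcongr

end InnerProductSpace

theorem EuclideanSpace.inner_le_inner_of_nonneg {ι : Type*} [Fintype ι]
    {x y y' : EuclideanSpace ℝ ι} (hx : ∀ i, 0 ≤ x i) (hle : ∀ i, y i ≤ y' i) :
    ⟪y, x⟫ ≤ ⟪y', x⟫ := by
  simp only [PiLp.inner_apply, RCLike.inner_apply, conj_trivial]
  exact Finset.sum_le_sum fun i _ ↦ mul_le_mul_of_nonneg_left (hle i) (hx i)

lemma isClosed_unitSimplex (n : ℕ) : IsClosed (unitSimplex n) :=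
  (isClosed_stdSimplex ℝ (Fin n)).preimage (PiLp.continuous_ofLp 2 _)

lemma unitSimplex_nonempty {n : ℕ} (hn : 0 < n) : (unitSimplex n).Nonempty :=
  ⟨WithLp.toLp 2 (Pi.single ⟨0, hn⟩ 1), single_mem_stdSimplex ℝ _⟩

/-- `C_λ` is nondecreasing for the coordinatewise order. -/
theorem stmt8 {n : ℕ} (hn : 0 < n) (lam : ℝ) (hlam : 0 < lam)
    (y y' : EuclideanSpace ℝ (Fin n)) (hle : ∀ i, y i ≤ y' i) :
    Cupper lam y ≤ Cupper lam y' := by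
  have hmax := isGreatest_inner_sub_norm_sq_div (isClosed_unitSimplex n) (unitSimplex_nonempty hn)
    hlam
  obtain ⟨x, hx, hCy⟩ := (hmax y).1
  have hCy' := (hmax y').2 ⟨x, hx, rfl⟩
  have hinner := EuclideanSpace.inner_le_inner_of_nonneg hx.1 hle
  dsimp only at hCy hCy'
  unfold Cupper
  linarith
end

section
/- Equivalence of the constrained min–max problem with the root-finding problem: suppose the feasible set S = {Ω ∈ ℝ^N : g_q(Ω) ≤ σ_q for all q = 1,…,Q} is nonempty, and let t* = inf_{Ω ∈ S} max_{1≤k≤K} f_k(Ω) (a real number, since the f_k are bounded). Then F(t*) = 0. -/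
open scoped BigOperators

/-!
`F(t*)` is the value of the epigraph reformulation of `min_{Ω ∈ S} max_k f_k(Ω)`. At `t = t*`, every
feasible `Ω` has some `f_k(Ω) - t* ≥ 0` and every infeasible one some `g_q(Ω) - σ_q > 0`, so the inner
maximum is nonnegative everywhere; and a feasible `Ω` that is `ε`-optimal for `t*` makes it at most
`ε`. The infimum `t*` is a genuine one because `|∑_n h_n e^{iΩ_n}| ≤ ∑_n |h_n|` bounds every `f_k`.
-/

/-- `f_k(Ω) = −(1/α)·|∑_n h_n e^{iΩ_n}|²`. -/
noncomputable def fObj {N : ℕ} (α : ℝ) (h : Fin N → ℂ) (Ω : Fin N → ℝ) : ℝ :=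
  -(1 / α) * ‖∑ n, h n * Complex.exp (Complex.I * (Ω n : ℂ))‖ ^ 2

/-- `g_q(Ω) = |∑_n c_n e^{iΩ_n}|²`. -/
noncomputable def gObj {N : ℕ} (c : Fin N → ℂ) (Ω : Fin N → ℝ) : ℝ :=
  ‖∑ n, c n * Complex.exp (Complex.I * (Ω n : ℂ))‖ ^ 2

/-- `F(t) = inf_Ω max( max_k (f_k(Ω) − t), max_q (g_q(Ω) − σ_q) )`. -/
noncomputable def Ffun {N K Q : ℕ} (h : Fin K → Fin N → ℂ) (α : Fin K → ℝ)
    (c : Fin Q → Fin N → ℂ) (σ : Fin Q → ℝ) (t : ℝ) : ℝ :=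
  ⨅ Ω : Fin N → ℝ, max (⨆ k, (fObj (α k) (h k) Ω - t)) (⨆ q, (gObj (c q) Ω - σ q))

section FiniteSup

variable {ι : Type*} [Finite ι]

-- Over an empty index type both suprema are the junk value `0`, so the claim holds there too.
lemma Real.zero_le_iSup_sub_of_le_iSup (f : ι → ℝ) {t : ℝ} (ht : t ≤ ⨆ i, f i) :
    0 ≤ ⨆ i, (f i - t) := by
  cases isEmpty_or_nonempty ι
  · simp
  · obtain ⟨i, hi⟩ := exists_eq_ciSup_of_finite (f := f)
    exact (sub_nonneg.2 (hi ▸ ht)).trans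
      (le_ciSup (f := fun i => f i - t) (Set.finite_range _).bddAbove i)

lemma Real.iSup_sub_le_of_iSup_le (f : ι → ℝ) {t ε : ℝ} (hf : ⨆ i, f i ≤ t + ε) (hε : 0 ≤ ε) :
    ⨆ i, (f i - t) ≤ ε :=
  Real.iSup_le (fun i => by linarith [le_ciSup (Set.finite_range f).bddAbove i]) hε

lemma BddBelow.range_iSup {X : Type*} {f : ι → X → ℝ} (hf : ∀ i, BddBelow (Set.range (f i))) :
    BddBelow (Set.range fun x => ⨆ i, f i x) := by
  cases isEmpty_or_nonempty ι
  · exact ⟨0, by rintro _ ⟨x, rfl⟩; simp⟩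
  · obtain ⟨i⟩ := ‹Nonempty ι›
    obtain ⟨m, hm⟩ := hf i
    exact ⟨m, by
      rintro _ ⟨x, rfl⟩
      exact (hm ⟨x, rfl⟩).trans (le_ciSup (Set.finite_range fun j => f j x).bddAbove i)⟩

end FiniteSup

section EpigraphValue

variable {X ι κ : Type*} [Finite ι] [Finite κ]

theorem iInf_max_iSup_sub_constrainedInf_eq_zero (f : ι → X → ℝ) (g : κ → X → ℝ) (σ : κ → ℝ)
    (hS : ∃ x, ∀ q, g q x ≤ σ q)
    (hbdd : BddBelow (Set.range fun x : {x // ∀ q, g q x ≤ σ q} => ⨆ i, f i x)) :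
    ⨅ x, max (⨆ i, (f i x - ⨅ y : {y // ∀ q, g q y ≤ σ q}, ⨆ i, f i y))
        (⨆ q, (g q x - σ q)) = 0 := by
  obtain ⟨x₀, hx₀⟩ := hS
  have : Nonempty X := ⟨x₀⟩
  have : Nonempty {x // ∀ q, g q x ≤ σ q} := ⟨⟨x₀, hx₀⟩⟩
  set tstar := ⨅ y : {y // ∀ q, g q y ≤ σ q}, ⨆ i, f i y
  have hnonneg : ∀ x, 0 ≤ max (⨆ i, (f i x - tstar)) (⨆ q, (g q x - σ q)) := by
    intro x
    by_cases hx : ∀ q, g q x ≤ σ q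
    · exact le_max_of_le_left
        (Real.zero_le_iSup_sub_of_le_iSup _ (ciInf_le hbdd ⟨x, hx⟩))
    · obtain ⟨q, hq⟩ := not_forall.1 hx
      exact le_max_of_le_right <| (sub_nonneg.2 (not_le.1 hq).le).trans
        (le_ciSup (Set.finite_range fun q => g q x - σ q).bddAbove q)
  refine le_antisymm (le_of_forall_pos_le_add fun ε hε => ?_) (le_ciInf hnonneg)
  obtain ⟨⟨x, hx⟩, hxε⟩ := exists_lt_of_ciInf_lt (lt_add_of_pos_right tstar hε)
  calc _ ≤ max (⨆ i, (f i x - tstar)) (⨆ q, (g q x - σ q)) :=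
        ciInf_le ⟨(0 : ℝ), by rintro _ ⟨x, rfl⟩; exact hnonneg x⟩ x
    _ ≤ ε := max_le (Real.iSup_sub_le_of_iSup_le _ hxε.le hε.le)
        (Real.iSup_le (fun q => by linarith [hx q]) hε.le)
    _ = 0 + ε := (zero_add ε).symm

end EpigraphValue

lemma gObj_le_sq_sum_norm {N : ℕ} (c : Fin N → ℂ) (Ω : Fin N → ℝ) :
    gObj c Ω ≤ (∑ n, ‖c n‖) ^ 2 := by
  refine pow_le_pow_left₀ (norm_nonneg _) ((norm_sum_le _ _).trans_eq ?_) 2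
  refine Finset.sum_congr rfl fun n _ => ?_
  rw [norm_mul, Complex.norm_exp_I_mul_ofReal, mul_one]

lemma abs_fObj_le {N : ℕ} (α : ℝ) (h : Fin N → ℂ) (Ω : Fin N → ℝ) :
    |fObj α h Ω| ≤ |1 / α| * (∑ n, ‖h n‖) ^ 2 := by
  have hg : 0 ≤ gObj h Ω := sq_nonneg _
  change |-(1 / α) * gObj h Ω| ≤ _
  rw [abs_mul, abs_neg, abs_of_nonneg hg]
  exact mul_le_mul_of_nonneg_left (gObj_le_sq_sum_norm h Ω) (abs_nonneg _)

lemma bddBelow_range_fObj {N : ℕ} (α : ℝ) (h : Fin N → ℂ) : BddBelow (Set.range (fObj α h)) :=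
  ⟨-(|1 / α| * (∑ n, ‖h n‖) ^ 2), by
    rintro _ ⟨Ω, rfl⟩
    exact neg_le_of_abs_le (abs_fObj_le α h Ω)⟩

theorem stmt12_general {N K Q : ℕ}
    (h : Fin K → Fin N → ℂ) (α : Fin K → ℝ)
    (c : Fin Q → Fin N → ℂ) (σ : Fin Q → ℝ)
    (hfeas : ∃ Ω : Fin N → ℝ, ∀ q, gObj (c q) Ω ≤ σ q) :
    Ffun h α c σ
      (⨅ Ω : {Ω : Fin N → ℝ // ∀ q, gObj (c q) Ω ≤ σ q},
        ⨆ k, fObj (α k) (h k) (Ω : Fin N → ℝ)) = 0 := by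
  have hbdd := BddBelow.range_iSup fun k => bddBelow_range_fObj (α k) (h k)
  refine iInf_max_iSup_sub_constrainedInf_eq_zero (fun k => fObj (α k) (h k)) (fun q => gObj (c q))
    σ hfeas (hbdd.mono ?_)
  rintro _ ⟨Ω, rfl⟩
  exact ⟨Ω, rfl⟩

/-- Equivalence of the constrained min–max problem with root finding: if the feasible set
`S = {Ω : g_q(Ω) ≤ σ_q ∀q}` is nonempty and `t* = inf_{Ω ∈ S} max_k f_k(Ω)`, then `F(t*) = 0`. -/
theorem stmt12 {N K Q : ℕ} (hN : 0 < N) (hK : 0 < K) (hQ : 0 < Q)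
    (h : Fin K → Fin N → ℂ) (α : Fin K → ℝ) (hα : ∀ k, 0 < α k)
    (c : Fin Q → Fin N → ℂ) (σ : Fin Q → ℝ)
    (hfeas : ∃ Ω : Fin N → ℝ, ∀ q, gObj (c q) Ω ≤ σ q) :
    Ffun h α c σ
      (⨅ Ω : {Ω : Fin N → ℝ // ∀ q, gObj (c q) Ω ≤ σ q},
        ⨆ k, fObj (α k) (h k) (Ω : Fin N → ℝ)) = 0 :=
  stmt12_general h α c σ hfeas
end
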